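/- For every W-logic WL and every WL-prime set Σ, there exists a class C of sets of WL-prime sets such that (Σ, C) is a WL-segment. -/

import Mathlib

set_option autoImplicit false

/-- Formulas of the propositional modal language:
`A ::= p | ⊥ | A∧A | A∨A | A→A | □A | ◇A`. -/
inductive Formula : Type
  | var : ℕ → Formula
  | bot : Formula
  | and : Formula → Formula → Formula
  | or : Formula → Formula → Formula
  | imp : Formula → Formula → Formula
  | box : Formula → Formula
  | dia : Formula → Formula
  deriving DecidableEq

/-- `¬A := A → ⊥`. -/
def Formula.neg (A : Formula) : Formula := A.imp Formula.bot

/-- `⊤ := ⊥ → ⊥`. -/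
def Formula.top : Formula := Formula.bot.imp Formula.bot

/-- A specification of which additional modal axioms a logic has:
`N` (□⊤ / N-condition), `C` (C_□ together with K_◇ in W-logics),
`P` (P_□ classically / P_◇ in W-logics), `D` (□A→◇A), `T` (T_□, and T_◇ in W-logics). -/
structure LogicSpec where
  hasN : Bool := false
  hasC : Bool := false
  hasP : Bool := false
  hasD : Bool := false
  hasT : Bool := false

/-- The names of the fourteen systems. -/
inductive LName : Type
  | M | MN | MC | K | MP | MNP | MD | MND | MCD | KD | MT | MNT | MCT | KT

/-- The axiom flags of the fourteen classical modal logics. -/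
def cSpec : LName → LogicSpec
  | .M   => {}
  | .MN  => { hasN := true }
  | .MC  => { hasC := true }
  | .K   => { hasN := true, hasC := true }
  | .MP  => { hasP := true }
  | .MNP => { hasN := true, hasP := true }
  | .MD  => { hasD := true }
  | .MND => { hasN := true, hasD := true }
  | .MCD => { hasC := true, hasD := true }
  | .KD  => { hasN := true, hasC := true, hasD := true }
  | .MT  => { hasT := true }
  | .MNT => { hasN := true, hasT := true }
  | .MCT => { hasC := true, hasT := true }
  | .KT  => { hasN := true, hasC := true, hasT := true }

/-- The axiom flags of the fourteen W-logics (WMD and WMCD include the axiom P_◇ explicitly). -/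
def wSpec : LName → LogicSpec
  | .MD  => { hasP := true, hasD := true }
  | .MCD => { hasC := true, hasP := true, hasD := true }
  | n    => cSpec n

/-- Hilbert-style provability in the W-logic determined by the flags `S`:
intuitionistic propositional logic plus dual∧, the monotonicity rules M_□ and M_◇,
and, according to the flags, N_□, C_□ together with K_◇, P_◇, D, T_□ together with T_◇. -/
inductive WProof (S : LogicSpec) : Formula → Prop
  | ax1 (A B : Formula) : WProof S (A.imp (B.imp A))
  | ax2 (A B C : Formula) : WProof S ((A.imp (B.imp C)).imp ((A.imp B).imp (A.imp C)))
  | andI (A B : Formula) : WProof S (A.imp (B.imp (A.and B)))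
  | andE1 (A B : Formula) : WProof S ((A.and B).imp A)
  | andE2 (A B : Formula) : WProof S ((A.and B).imp B)
  | orI1 (A B : Formula) : WProof S (A.imp (A.or B))
  | orI2 (A B : Formula) : WProof S (B.imp (A.or B))
  | orE (A B C : Formula) : WProof S ((A.imp C).imp ((B.imp C).imp ((A.or B).imp C)))
  | botE (A : Formula) : WProof S (Formula.bot.imp A)
  | mp {A B : Formula} : WProof S (A.imp B) → WProof S A → WProof S B
  | dualAnd (A : Formula) : WProof S (((Formula.box A).and (Formula.dia A.neg)).neg)
  | monBox {A B : Formula} : WProof S (A.imp B) → WProof S ((Formula.box A).imp (Formula.box B))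
  | monDia {A B : Formula} : WProof S (A.imp B) → WProof S ((Formula.dia A).imp (Formula.dia B))
  | nBox : S.hasN = true → WProof S (Formula.box Formula.top)
  | cBox (A B : Formula) : S.hasC = true →
      WProof S (((Formula.box A).and (Formula.box B)).imp (Formula.box (A.and B)))
  | kDia (A B : Formula) : S.hasC = true →
      WProof S ((Formula.box (A.imp B)).imp ((Formula.dia A).imp (Formula.dia B)))
  | pDia : S.hasP = true → WProof S (Formula.dia Formula.top)
  | dAx (A : Formula) : S.hasD = true → WProof S ((Formula.box A).imp (Formula.dia A))
  | tBox (A : Formula) : S.hasT = true → WProof S ((Formula.box A).imp A)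
  | tDia (A : Formula) : S.hasT = true → WProof S (A.imp (Formula.dia A))

/-- Conjunction of a list of formulas (empty conjunction is ⊤). -/
def conjList : List Formula → Formula
  | [] => Formula.top
  | [A] => A
  | A :: B :: l => A.and (conjList (B :: l))

/-- Disjunction of a list of formulas (empty disjunction is ⊥). -/
def disjList : List Formula → Formula
  | [] => Formula.bot
  | [A] => A
  | A :: B :: l => A.or (disjList (B :: l))

/-- `⋀Γ` for a finite multiset `Γ` (empty `Γ` is read as ⊤). -/
noncomputable def conjM (Γ : Multiset Formula) : Formula := conjList Γ.toList

/-- `⋁Δ` for a finite multiset `Δ` (empty `Δ` is read as ⊥). -/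
noncomputable def disjM (Δ : Multiset Formula) : Formula := disjList Δ.toList

/-- `A` is deducible in the W-logic `S` from the set of formulas `Sg`:
there is a finite subset `{B₁,…,Bₙ} ⊆ Sg` with `⊢ B₁∧…∧Bₙ → A`. -/
def Deduces (S : LogicSpec) (Sg : Set Formula) (A : Formula) : Prop :=
  ∃ L : List Formula, (∀ B ∈ L, B ∈ Sg) ∧ WProof S ((conjList L).imp A)

/-- A WL-prime set: consistent, closed under deduction, and with the disjunction property. -/
structure IsPrime (S : LogicSpec) (Sg : Set Formula) : Prop where
  consistent : ¬ Deduces S Sg Formula.bot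
  closed : ∀ A : Formula, Deduces S Sg A → A ∈ Sg
  disj : ∀ A B : Formula, (A.or B) ∈ Sg → A ∈ Sg ∨ B ∈ Sg

/-- A WL-segment `(Sg, C)`: `Sg` is WL-prime and `C` is a class of sets of WL-prime
sets satisfying the box and diamond conditions, together with the extra conditions
for logics containing C_□ & K_◇, D, or T_□ & T_◇. -/
structure IsSegment (S : LogicSpec) (Sg : Set Formula) (C : Set (Set (Set Formula))) : Prop where
  prime : IsPrime S Sg
  allPrime : ∀ U ∈ C, ∀ Pr ∈ U, IsPrime S Pr
  boxCond : ∀ A : Formula, Formula.box A ∈ Sg → ∃ U ∈ C, ∀ Pr ∈ U, A ∈ Pr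
  diaCond : ∀ A : Formula, Formula.dia A ∈ Sg → ∀ U ∈ C, ∃ Pr ∈ U, A ∈ Pr
  cCond : S.hasC = true → ∀ U ∈ C, ∀ U' ∈ C, U ∩ U' ∈ C
  dCond : S.hasD = true → ∀ U ∈ C, ∀ U' ∈ C, (U ∩ U').Nonempty
  tCond : S.hasT = true → ∀ U ∈ C, Sg ∈ U

/-! For a prime set `Σ`, the sets `{P prime | A ∈ P}` with `□A ∈ Σ` form a segment. If
`□A, ◇B ∈ Σ`, then `{A, B}` is consistent, since otherwise `⊢ B → ¬A` would put `◇¬A` into `Σ`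
against `dual∧`; Lindenbaum's lemma extends `{A, B}` to a prime set, which gives the diamond
condition. Since `{P | A ∈ P} ∩ {P | B ∈ P} = {P | A ∧ B ∈ P}` for prime `P`, the axioms `C_□`,
`D` and `T_□` give the remaining three conditions. -/

namespace WProof

variable {S : LogicSpec} {A B C D : Formula}

theorem imp_self (A : Formula) : WProof S (A.imp A) :=
  mp (mp (ax2 A (A.imp A) A) (ax1 A (A.imp A))) (ax1 A A)

theorem top : WProof S Formula.top := imp_self Formula.bot

theorem weaken (B : Formula) (h : WProof S A) : WProof S (B.imp A) := mp (ax1 A B) h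

theorem imp_mp (h : WProof S (A.imp (B.imp C))) (g : WProof S (A.imp B)) : WProof S (A.imp C) :=
  mp (mp (ax2 A B C) h) g

theorem imp_trans (h₁ : WProof S (A.imp B)) (h₂ : WProof S (B.imp C)) : WProof S (A.imp C) :=
  imp_mp (weaken A h₂) h₁

theorem imp_comm (h : WProof S (A.imp (B.imp C))) : WProof S (B.imp (A.imp C)) :=
  imp_trans (ax1 B A) (mp (ax2 A B C) h)

theorem imp_imp_trans (h : WProof S (A.imp (B.imp C))) (g : WProof S (C.imp D)) :
    WProof S (A.imp (B.imp D)) :=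
  imp_trans h (mp (ax2 B C D) (weaken B g))

end WProof

section ConjList

open WProof

variable {S : LogicSpec}

theorem conjList_cons_imp (A : Formula) (L : List Formula) :
    WProof S (A.imp ((conjList L).imp (conjList (A :: L)))) := by
  cases L with
  | nil => exact ax1 A Formula.top
  | cons B l => exact andI A (conjList (B :: l))

theorem conjList_imp_of_mem {A : Formula} : ∀ {L : List Formula}, A ∈ L →
    WProof S ((conjList L).imp A)
  | [B], h => List.mem_singleton.1 h ▸ imp_self A
  | B :: C :: l, h => by
    rcases List.mem_cons.1 h with rfl | h
    · exact andE1 A (conjList (C :: l))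
    · exact imp_trans (andE2 B (conjList (C :: l))) (conjList_imp_of_mem h)

theorem imp_conjList {C : Formula} : ∀ {L : List Formula}, (∀ A ∈ L, WProof S (C.imp A)) →
    WProof S (C.imp (conjList L))
  | [], _ => weaken C top
  | A :: l, h =>
    imp_mp (imp_mp (weaken C (conjList_cons_imp A l)) (h A List.mem_cons_self))
      (imp_conjList fun x hx => h x (List.mem_cons_of_mem A hx))

theorem conjList_imp_conjList {L M : List Formula} (h : ∀ A ∈ L, A ∈ M) :
    WProof S ((conjList M).imp (conjList L)) :=
  imp_conjList fun _ hA => conjList_imp_of_mem (h _ hA)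

end ConjList

namespace Deduces

variable {S : LogicSpec} {Γ : Set Formula} {A B C : Formula}

theorem of_proof (h : WProof S A) : Deduces S Γ A :=
  ⟨[], by simp, WProof.weaken _ h⟩

theorem of_mem (h : A ∈ Γ) : Deduces S Γ A :=
  ⟨[A], by simpa using h, WProof.imp_self A⟩

theorem mp (h₁ : Deduces S Γ (A.imp B)) (h₂ : Deduces S Γ A) : Deduces S Γ B := by
  obtain ⟨L₁, hL₁, hp₁⟩ := h₁
  obtain ⟨L₂, hL₂, hp₂⟩ := h₂
  refine ⟨L₁ ++ L₂, fun x hx => (List.mem_append.1 hx).elim (hL₁ x) (hL₂ x),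
    WProof.imp_mp (B := A) ?_ ?_⟩
  · exact WProof.imp_trans (conjList_imp_conjList fun _ hx => List.mem_append_left _ hx) hp₁
  · exact WProof.imp_trans (conjList_imp_conjList fun _ hx => List.mem_append_right _ hx) hp₂

theorem deduction (h : Deduces S (insert A Γ) B) : Deduces S Γ (A.imp B) := by
  classical
  obtain ⟨L, hL, hp⟩ := h
  refine ⟨L.filter (· ≠ A), fun x hx => ?_, ?_⟩
  · have := List.mem_filter.1 hx
    exact (hL x this.1).resolve_left (by simpa using this.2)
  · have hsub : WProof S ((conjList (A :: L.filter (· ≠ A))).imp (conjList L)) :=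
      conjList_imp_conjList fun x hx => by
        by_cases hxA : x = A <;> simp [hxA, hx]
    exact WProof.imp_comm
      (WProof.imp_imp_trans (conjList_cons_imp _ _) (WProof.imp_trans hsub hp))

theorem cut (h₁ : Deduces S Γ A) (h₂ : Deduces S (insert A Γ) B) : Deduces S Γ B :=
  (deduction h₂).mp h₁

theorem or_elim (h : Deduces S Γ (A.or B)) (hA : Deduces S (insert A Γ) C)
    (hB : Deduces S (insert B Γ) C) : Deduces S Γ C :=
  (((of_proof (WProof.orE A B C)).mp hA.deduction).mp hB.deduction).mp h

theorem proof_of_empty (h : Deduces S ∅ A) : WProof S A := by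
  obtain ⟨L, hL, hp⟩ := h
  obtain rfl : L = [] := List.eq_nil_iff_forall_not_mem.2 hL
  exact WProof.mp hp WProof.top

theorem exists_mem_of_sUnion {c : Set (Set Formula)} (hne : c.Nonempty)
    (hc : IsChain (· ⊆ ·) c) (h : Deduces S (⋃₀ c) A) : ∃ Δ ∈ c, Deduces S Δ A := by
  obtain ⟨L, hL, hp⟩ := h
  obtain ⟨Δ, hΔ, hLΔ⟩ := hc.directedOn.exists_mem_subset_of_finite_of_subset_sUnion hne
    L.finite_toSet hL
  exact ⟨Δ, hΔ, L, hLΔ, hp⟩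

end Deduces

theorem exists_isPrime_superset {S : LogicSpec} {Γ : Set Formula}
    (hΓ : ¬ Deduces S Γ Formula.bot) : ∃ P, IsPrime S P ∧ Γ ⊆ P := by
  set F := {Δ | Γ ⊆ Δ ∧ ¬ Deduces S Δ Formula.bot}
  have hchain : ∀ c ⊆ F, IsChain (· ⊆ ·) c → c.Nonempty → ∃ ub ∈ F, ∀ Δ ∈ c, Δ ⊆ ub := by
    intro c hcF hc hne
    refine ⟨⋃₀ c, ⟨?_, fun h => ?_⟩, fun _ => Set.subset_sUnion_of_mem⟩
    · obtain ⟨Δ, hΔ⟩ := hne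
      exact (hcF hΔ).1.trans (Set.subset_sUnion_of_mem hΔ)
    · obtain ⟨Δ, hΔ, hΔbot⟩ := Deduces.exists_mem_of_sUnion hne hc h
      exact (hcF hΔ).2 hΔbot
  obtain ⟨P, hΓP, hmax⟩ := zorn_subset_nonempty F hchain Γ ⟨subset_rfl, hΓ⟩
  have hcon : ¬ Deduces S P Formula.bot := hmax.prop.2
  have refute : ∀ A ∉ P, Deduces S (insert A P) Formula.bot := fun A hA => by
    by_contra h
    exact hA (hmax.mem_of_prop_insert ⟨hΓP.trans (Set.subset_insert A P), h⟩)
  refine ⟨P, ⟨hcon, fun A hA => ?_, fun A B hAB => ?_⟩, hΓP⟩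
  · by_contra hAP
    exact hcon (hA.cut (refute A hAP))
  · by_contra! hAB'
    exact hcon ((Deduces.of_mem hAB).or_elim (refute A hAB'.1) (refute B hAB'.2))

namespace IsPrime

variable {S : LogicSpec} {P : Set Formula} {A B C : Formula}

theorem bot_notMem (hP : IsPrime S P) : Formula.bot ∉ P :=
  fun h => hP.consistent (Deduces.of_mem h)

theorem mem_of_imp (hP : IsPrime S P) (h : WProof S (A.imp B)) (hA : A ∈ P) : B ∈ P :=
  hP.closed B ((Deduces.of_proof h).mp (Deduces.of_mem hA))

theorem mem_of_imp₂ (hP : IsPrime S P) (h : WProof S (A.imp (B.imp C))) (hA : A ∈ P)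
    (hB : B ∈ P) : C ∈ P :=
  hP.closed C (((Deduces.of_proof h).mp (Deduces.of_mem hA)).mp (Deduces.of_mem hB))

theorem and_mem_iff (hP : IsPrime S P) : A.and B ∈ P ↔ A ∈ P ∧ B ∈ P :=
  ⟨fun h => ⟨hP.mem_of_imp (.andE1 A B) h, hP.mem_of_imp (.andE2 A B) h⟩,
    fun h => hP.mem_of_imp₂ (.andI A B) h.1 h.2⟩

theorem exists_isPrime_of_box_of_dia (hP : IsPrime S P) (hA : A.box ∈ P) (hB : B.dia ∈ P) :
    ∃ Q, IsPrime S Q ∧ A ∈ Q ∧ B ∈ Q := by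
  have hcon : ¬ Deduces S {A, B} Formula.bot := fun h => by
    rw [← insert_empty_eq B] at h
    have hBA : WProof S (B.imp A.neg) := h.deduction.deduction.proof_of_empty
    have hdia : A.neg.dia ∈ P := hP.mem_of_imp (.monDia hBA) hB
    exact hP.bot_notMem (hP.mem_of_imp₂ (WProof.imp_imp_trans (.andI _ _) (.dualAnd A)) hA hdia)
  obtain ⟨Q, hQ, hABQ⟩ := exists_isPrime_superset hcon
  exact ⟨Q, hQ, hABQ (by simp), hABQ (by simp)⟩

end IsPrime

def primesContaining (S : LogicSpec) (A : Formula) : Set (Set Formula) :=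
  {P | IsPrime S P ∧ A ∈ P}

theorem primesContaining_inter (S : LogicSpec) (A B : Formula) :
    primesContaining S A ∩ primesContaining S B = primesContaining S (A.and B) := by
  ext P
  simp only [primesContaining, Set.mem_inter_iff, Set.mem_ofPred_eq]
  exact ⟨fun h => ⟨h.1.1, h.1.1.and_mem_iff.2 ⟨h.1.2, h.2.2⟩⟩,
    fun h => ⟨⟨h.1, (h.1.and_mem_iff.1 h.2).1⟩, h.1, (h.1.and_mem_iff.1 h.2).2⟩⟩

def canonicalNbhds (S : LogicSpec) (Sg : Set Formula) : Set (Set (Set Formula)) :=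
  primesContaining S '' {A | A.box ∈ Sg}

theorem isSegment_canonicalNbhds {S : LogicSpec} {Sg : Set Formula} (h : IsPrime S Sg) :
    IsSegment S Sg (canonicalNbhds S Sg) where
  prime := h
  allPrime := by
    rintro _ ⟨A, -, rfl⟩ P hP
    exact hP.1
  boxCond A hA := ⟨_, ⟨A, hA, rfl⟩, fun _ hP => hP.2⟩
  diaCond := by
    rintro B hB _ ⟨A, hA, rfl⟩
    obtain ⟨Q, hQ, hAQ, hBQ⟩ := h.exists_isPrime_of_box_of_dia hA hB
    exact ⟨Q, ⟨hQ, hAQ⟩, hBQ⟩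
  cCond := by
    rintro hC _ ⟨A, hA, rfl⟩ _ ⟨B, hB, rfl⟩
    refine ⟨A.and B, ?_, (primesContaining_inter S A B).symm⟩
    exact h.mem_of_imp (.cBox A B hC) (h.and_mem_iff.2 ⟨hA, hB⟩)
  dCond := by
    rintro hD _ ⟨A, hA, rfl⟩ _ ⟨B, hB, rfl⟩
    obtain ⟨Q, hQ, hAQ, hBQ⟩ := h.exists_isPrime_of_box_of_dia hA (h.mem_of_imp (.dAx B hD) hB)
    exact ⟨Q, ⟨hQ, hAQ⟩, hQ, hBQ⟩
  tCond := by
    rintro hT _ ⟨A, hA, rfl⟩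
    exact ⟨h, h.mem_of_imp (.tBox A hT) hA⟩

/-- for every W-logic WL and every WL-prime set `Σ` there is a class `C`
of sets of WL-prime sets such that `(Σ, C)` is a WL-segment. -/
theorem statement16 (L : LName) (Sg : Set Formula) (h : IsPrime (wSpec L) Sg) :
    ∃ C : Set (Set (Set Formula)), IsSegment (wSpec L) Sg C :=
  ⟨_, isSegment_canonicalNbhds h⟩
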